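/- For every nonnegative even integer t and every integer p ≥ 1, the Fourier coefficient c_p(t) = 2∫₀¹ x^t cos(pπx) dx satisfies (−1)^p·c_p(t) ≥ 0. -/

import Mathlib

open Real intervalIntegral

/-!
For `sin a = 0`, `a ≠ 0`, two integrations by parts give, with `c n = ∫₀¹ xⁿ cos (a x) dx`,
`c (n + 2) = (n + 2) / a² · (cos a - (n + 1) c n)`. As `cos a = ±1` and trivially
`|c n| ≤ 1 / (n + 1)`, the product `cos a · c (n + 2)` is nonnegative; and `c 0 = sin a / a = 0`.
-/

lemma abs_integral_pow_mul_cos_le (a : ℝ) (n : ℕ) :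
    |∫ x in (0 : ℝ)..1, x ^ n * cos (a * x)| ≤ 1 / (n + 1) := by
  calc |∫ x in (0 : ℝ)..1, x ^ n * cos (a * x)| ≤ ∫ x in (0 : ℝ)..1, x ^ n := by
        rw [← norm_eq_abs]
        refine norm_integral_le_of_norm_le zero_le_one (.of_forall fun x hx => ?_)
          ((continuous_pow n).intervalIntegrable _ _)
        rw [norm_mul, norm_pow, Real.norm_of_nonneg hx.1.le]
        exact mul_le_of_le_one_right (pow_nonneg hx.1.le n) (abs_cos_le_one _)
    _ = 1 / (n + 1) := by simp [integral_pow]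

section

variable {a : ℝ}

lemma hasDerivAt_sin_mul_div (ha : a ≠ 0) (x : ℝ) :
    HasDerivAt (fun y => sin (a * y) / a) (cos (a * x)) x := by
  simpa [mul_div_assoc, ha] using ((hasDerivAt_id x).const_mul a).sin.div_const a

lemma hasDerivAt_neg_cos_mul_div (ha : a ≠ 0) (x : ℝ) :
    HasDerivAt (fun y => -cos (a * y) / a) (sin (a * x)) x := by
  simpa [mul_div_assoc, ha] using ((hasDerivAt_id x).const_mul a).cos.neg.div_const a

lemma integral_cos_mul (ha : a ≠ 0) : ∫ x in (0 : ℝ)..1, cos (a * x) = sin a / a := by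
  rw [integral_eq_sub_of_hasDerivAt (fun x _ => hasDerivAt_sin_mul_div ha x)
    ((by fun_prop : Continuous fun x => cos (a * x)).intervalIntegrable _ _)]
  simp

lemma integral_pow_succ_mul_cos (ha : a ≠ 0) (n : ℕ) :
    ∫ x in (0 : ℝ)..1, x ^ (n + 1) * cos (a * x)
      = sin a / a - (n + 1) / a * ∫ x in (0 : ℝ)..1, x ^ n * sin (a * x) := by
  rw [integral_mul_deriv_eq_deriv_mul (fun x _ => hasDerivAt_pow (n + 1) x)
    (fun x _ => hasDerivAt_sin_mul_div ha x) ((by fun_prop : Continuous _).intervalIntegrable _ _)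
    ((by fun_prop : Continuous fun x => cos (a * x)).intervalIntegrable _ _)]
  simp only [one_pow, one_mul, mul_one, mul_zero, sin_zero, zero_div, sub_zero,
    add_tsub_cancel_right, ← integral_const_mul]
  congr 1
  refine integral_congr fun x _ => ?_
  push_cast
  ring

lemma integral_pow_succ_mul_sin (ha : a ≠ 0) (n : ℕ) :
    ∫ x in (0 : ℝ)..1, x ^ (n + 1) * sin (a * x)
      = -cos a / a + (n + 1) / a * ∫ x in (0 : ℝ)..1, x ^ n * cos (a * x) := by
  rw [integral_mul_deriv_eq_deriv_mul (fun x _ => hasDerivAt_pow (n + 1) x)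
    (fun x _ => hasDerivAt_neg_cos_mul_div ha x) ((by fun_prop : Continuous _).intervalIntegrable _ _)
    ((by fun_prop : Continuous fun x => sin (a * x)).intervalIntegrable _ _)]
  simp only [one_pow, one_mul, mul_one, mul_zero, cos_zero, zero_pow n.succ_ne_zero, zero_mul,
    neg_zero, add_zero, add_tsub_cancel_right, sub_eq_add_neg, ← integral_neg, ← integral_const_mul]
  congr 1
  refine integral_congr fun x _ => ?_
  push_cast
  ring

lemma integral_pow_add_two_mul_cos (ha : a ≠ 0) (hsin : sin a = 0) (n : ℕ) :
    ∫ x in (0 : ℝ)..1, x ^ (n + 2) * cos (a * x)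
      = (n + 2) / a ^ 2 * (cos a - (n + 1) * ∫ x in (0 : ℝ)..1, x ^ n * cos (a * x)) := by
  rw [integral_pow_succ_mul_cos ha, integral_pow_succ_mul_sin ha, hsin]
  field_simp
  push_cast
  ring

lemma cos_mul_integral_pow_add_two_mul_cos_nonneg (ha : a ≠ 0) (hsin : sin a = 0) (n : ℕ) :
    0 ≤ cos a * ∫ x in (0 : ℝ)..1, x ^ (n + 2) * cos (a * x) := by
  set K := ∫ x in (0 : ℝ)..1, x ^ n * cos (a * x)
  have hcos : cos a ^ 2 = 1 := by nlinarith [sin_sq_add_cos_sq a]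
  have habs : |cos a| = 1 := by rw [← sqrt_sq_eq_abs, hcos, sqrt_one]
  have hK : cos a * K ≤ 1 / (n + 1) := calc
    cos a * K ≤ |cos a * K| := le_abs_self _
    _ = |K| := by rw [abs_mul, habs, one_mul]
    _ ≤ 1 / (n + 1) := abs_integral_pow_mul_cos_le a n
  rw [integral_pow_add_two_mul_cos ha hsin]
  calc (0 : ℝ) ≤ (n + 2) / a ^ 2 * (1 - (n + 1) * (cos a * K)) := by
        have := sub_nonneg.2 ((le_div_iff₀' (by positivity)).1 hK)
        positivity
    _ = _ := by linear_combination (-(n + 2) / a ^ 2) * hcos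

lemma cos_mul_integral_pow_mul_cos_nonneg (ha : a ≠ 0) (hsin : sin a = 0) {n : ℕ} (hn : Even n) :
    0 ≤ cos a * ∫ x in (0 : ℝ)..1, x ^ n * cos (a * x) := by
  obtain ⟨k, rfl⟩ := hn
  cases k with
  | zero => simp [integral_cos_mul ha, hsin]
  | succ k =>
    rw [show k + 1 + (k + 1) = k + k + 2 by ring]
    exact cos_mul_integral_pow_add_two_mul_cos_nonneg ha hsin _

end

theorem fourier_cos_coeff_sign (t : ℕ) (hteven : Even t) (p : ℕ) (hp : 1 ≤ p) :
    0 ≤ (-1 : ℝ) ^ p * (2 * ∫ x in (0 : ℝ)..1, x ^ t * Real.cos (p * Real.pi * x)) := by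
  have ha : (p * π : ℝ) ≠ 0 := by positivity
  rw [← cos_nat_mul_pi, mul_left_comm]
  exact mul_nonneg zero_le_two (cos_mul_integral_pow_mul_cos_nonneg ha (sin_nat_mul_pi p) hteven)
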